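/- arXiv:2409.16624 — 2 statements merged into one kernel-verified Lean document; each statement's English description precedes it below -/
import Mathlib

section
/- For every Q > 0, any periodic solution γ of the Nose-Hoover system intersects the half-plane X₁ = {(x,0,z) : x < 0} in at least one point, and every intersection point of γ with the plane {y = 0} has x ≠ 0 (so the intersection is transverse). -/
/-!
Along a solution, `x² + y²` has derivative `-2zy²`, so by Grönwall a solution through a point
of the line `x = y = 0` stays on it for a whole period; there `ż = -1/Q < 0`, which is incompatible
with periodicity. This gives transversality. For the first claim, take a time where the periodic
function `x` is minimal: there `ẋ = y = 0`, so `ẍ = ẏ = -x` must be nonnegative, whence `x ≤ 0`,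
and `x ≠ 0` by transversality.
-/

open Set Filter Topology Function

/-- The Nose-Hoover vector field `F_Q(x,y,z) = (y, -x - z*y, (y²-1)/Q)`. -/
noncomputable def noseHoover (Q : ℝ) (p : ℝ × ℝ × ℝ) : ℝ × ℝ × ℝ :=
  (p.2.1, -p.1 - p.2.2 * p.2.1, (p.2.1 ^ 2 - 1) / Q)

section Calculus

variable {𝕜 E F : Type*} [NontriviallyNormedField 𝕜] [NormedAddCommGroup E] [NormedSpace 𝕜 E]
  [NormedAddCommGroup F] [NormedSpace 𝕜 F] {f : 𝕜 → E × F} {f' : E × F} {t : 𝕜}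

theorem HasDerivAt.fst (h : HasDerivAt f f' t) : HasDerivAt (fun s => (f s).1) f'.1 t :=
  (ContinuousLinearMap.fst 𝕜 E F).hasFDerivAt.comp_hasDerivAt t h

theorem HasDerivAt.snd (h : HasDerivAt f f' t) : HasDerivAt (fun s => (f s).2) f'.2 t :=
  (ContinuousLinearMap.snd 𝕜 E F).hasFDerivAt.comp_hasDerivAt t h

end Calculus

theorem IsLocalMin.nonneg_of_hasDerivAt_deriv {f g : ℝ → ℝ} {a c : ℝ} (hmin : IsLocalMin f a)
    (hf : ∀ t, HasDerivAt f (g t) t) (hg : HasDerivAt g c a) : 0 ≤ c := by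
  by_contra! hc
  have hdf : deriv f = g := funext fun t => (hf t).deriv
  -- a negative second derivative makes `a` also a local maximum, so `f` is locally constant
  have hmax : IsLocalMax f a :=
    isLocalMax_of_deriv_deriv_neg (by rwa [hdf, hg.deriv])
      (by rw [hdf]; exact hmin.hasDerivAt_eq_zero (hf a)) (hf a).continuousAt
  have hconst : f =ᶠ[𝓝 a] fun _ => f a := by
    filter_upwards [hmin, hmax] with t hge hle using le_antisymm hle hge
  have hg0 : g =ᶠ[𝓝 a] fun _ => 0 := by
    filter_upwards [hconst.eventually_nhds] with t (ht : f =ᶠ[𝓝 t] fun _ => f a)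
    rw [← hdf, ht.deriv_eq, deriv_const]
  exact hc.ne ((hg.congr_of_eventuallyEq hg0.symm).unique (hasDerivAt_const a 0))

theorem Function.Periodic.exists_forall_le_of_continuous {α : Type*} [LinearOrder α]
    [TopologicalSpace α] [ClosedIicTopology α] {f : ℝ → α} {c : ℝ} (hp : Periodic f c)
    (hc : c ≠ 0) (hf : Continuous f) : ∃ t, ∀ s, f t ≤ f s := by
  obtain ⟨_, ⟨t, rfl⟩, hleast⟩ := (hp.compact_of_continuous hc hf).exists_isLeast (range_nonempty f)
  exact ⟨t, fun s => hleast ⟨s, rfl⟩⟩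

namespace NoseHoover

variable {Q : ℝ} {x y z : ℝ → ℝ}

theorem hasDerivAt_sq_add_sq (hx : ∀ t, HasDerivAt x (y t) t)
    (hy : ∀ t, HasDerivAt y (-x t - z t * y t) t) (t : ℝ) :
    HasDerivAt (fun s => x s ^ 2 + y s ^ 2) (-2 * z t * y t ^ 2) t :=
  (((hx t).fun_pow 2).add ((hy t).fun_pow 2)).congr_deriv (by ring)

theorem sq_add_sq_eq_zero_of_eq_zero (hx : ∀ t, HasDerivAt x (y t) t)
    (hy : ∀ t, HasDerivAt y (-x t - z t * y t) t) (hz : Continuous z) {a b : ℝ}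
    (hxa : x a = 0) (hya : y a = 0) : ∀ s ∈ Icc a b, x s ^ 2 + y s ^ 2 = 0 := by
  obtain ⟨C, hC⟩ := isCompact_Icc.exists_bound_of_continuousOn (hz.continuousOn (s := Icc a b))
  refine eq_zero_of_abs_deriv_le_mul_abs_self_of_eq_zero_right (K := 2 * C)
    (fun s _ => (hasDerivAt_sq_add_sq hx hy s).continuousAt.continuousWithinAt)
    (fun s _ => (hasDerivAt_sq_add_sq hx hy s).hasDerivWithinAt) (by simp [hxa, hya]) ?_
  intro s hs
  have hzs : |z s| ≤ C := hC s (Ico_subset_Icc_self hs)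
  have hr : 0 ≤ x s ^ 2 + y s ^ 2 := by positivity
  rw [Real.norm_eq_abs, Real.norm_eq_abs, abs_of_nonneg hr, abs_mul, abs_mul,
    abs_of_nonneg (sq_nonneg (y s)), abs_neg, abs_two]
  nlinarith [abs_nonneg (z s), sq_nonneg (x s), sq_nonneg (y s)]

theorem x_ne_zero_of_y_eq_zero (hQ : 0 < Q) (hx : ∀ t, HasDerivAt x (y t) t)
    (hy : ∀ t, HasDerivAt y (-x t - z t * y t) t) (hz : ∀ t, HasDerivAt z ((y t ^ 2 - 1) / Q) t)
    {τ : ℝ} (hτ : 0 < τ) (hpz : Periodic z τ) {t : ℝ} (hyt : y t = 0) : x t ≠ 0 := by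
  intro hxt
  have hzc : Continuous z := continuous_iff_continuousAt.mpr fun t => (hz t).continuousAt
  have hy0 : ∀ s ∈ Icc t (t + τ), y s = 0 := fun s hs => by
    nlinarith [sq_add_sq_eq_zero_of_eq_zero hx hy hzc hxt hyt s hs, sq_nonneg (x s)]
  have hanti : StrictAntiOn z (Icc t (t + τ)) := by
    refine strictAntiOn_of_deriv_neg (convex_Icc _ _) hzc.continuousOn fun s hs => ?_
    rw [interior_Icc] at hs
    rw [(hz s).deriv, hy0 s (Ioo_subset_Icc_self hs)]
    exact div_neg_of_neg_of_pos (by norm_num) hQ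
  have hdecrease : z (t + τ) < z t :=
    hanti (left_mem_Icc.mpr (by linarith)) (right_mem_Icc.mpr (by linarith)) (by linarith)
  exact hdecrease.ne (hpz t)

theorem exists_y_eq_zero_and_x_nonpos (hx : ∀ t, HasDerivAt x (y t) t)
    (hy : ∀ t, HasDerivAt y (-x t - z t * y t) t) {τ : ℝ} (hτ : 0 < τ) (hpx : Periodic x τ) :
    ∃ t, y t = 0 ∧ x t ≤ 0 := by
  have hxc : Continuous x := continuous_iff_continuousAt.mpr fun t => (hx t).continuousAt
  obtain ⟨t, hmin⟩ := hpx.exists_forall_le_of_continuous hτ.ne' hxc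
  have hlocmin : IsLocalMin x t := Eventually.of_forall hmin
  have hyt : y t = 0 := hlocmin.hasDerivAt_eq_zero (hx t)
  have hddx := hlocmin.nonneg_of_hasDerivAt_deriv hx (hy t)
  rw [hyt, mul_zero, sub_zero, neg_nonneg] at hddx
  exact ⟨t, hyt, hddx⟩

end NoseHoover

theorem noseHoover_periodic_hits_X1_general (Q : ℝ) (hQ : 0 < Q)
    (γ : ℝ → ℝ × ℝ × ℝ)
    (hsol : ∀ t, HasDerivAt γ (noseHoover Q (γ t)) t)
    (τ : ℝ) (hτ : 0 < τ) (hper : ∀ t, γ (t + τ) = γ t) :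
    (∃ t : ℝ, (γ t).2.1 = 0 ∧ (γ t).1 < 0) ∧
    (∀ t : ℝ, (γ t).2.1 = 0 → (γ t).1 ≠ 0) := by
  have hx : ∀ t, HasDerivAt (fun s => (γ s).1) (γ t).2.1 t := fun t => (hsol t).fst
  have hy : ∀ t, HasDerivAt (fun s => (γ s).2.1) (-(γ t).1 - (γ t).2.2 * (γ t).2.1) t :=
    fun t => (hsol t).snd.fst
  have hz : ∀ t, HasDerivAt (fun s => (γ s).2.2) (((γ t).2.1 ^ 2 - 1) / Q) t :=
    fun t => (hsol t).snd.snd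
  have hpγ : Periodic γ τ := hper
  have htransverse : ∀ t, (γ t).2.1 = 0 → (γ t).1 ≠ 0 := fun t =>
    NoseHoover.x_ne_zero_of_y_eq_zero hQ hx hy hz hτ (hpγ.comp (·.2.2))
  obtain ⟨t, hyt, hxt⟩ := NoseHoover.exists_y_eq_zero_and_x_nonpos hx hy hτ (hpγ.comp (·.1))
  exact ⟨⟨t, hyt, hxt.lt_of_ne (htransverse t hyt)⟩, htransverse⟩

/-- For every `Q > 0`, any periodic (nonconstant) solution of the Nose-Hoover
system meets the half-plane `X₁ = {(x,0,z) : x < 0}`, and every intersection of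
the solution with the plane `{y = 0}` has `x ≠ 0`, i.e. is transverse. -/
theorem noseHoover_periodic_hits_X1 (Q : ℝ) (hQ : 0 < Q)
    (γ : ℝ → ℝ × ℝ × ℝ)
    (hsol : ∀ t, HasDerivAt γ (noseHoover Q (γ t)) t)
    (τ : ℝ) (hτ : 0 < τ) (hper : ∀ t, γ (t + τ) = γ t)
    (hnonconst : ∃ t s : ℝ, γ t ≠ γ s) :
    (∃ t : ℝ, (γ t).2.1 = 0 ∧ (γ t).1 < 0) ∧
    (∀ t : ℝ, (γ t).2.1 = 0 → (γ t).1 ≠ 0) :=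
  noseHoover_periodic_hits_X1_general Q hQ γ hsol τ hτ hper
end

section
/- Let γ be a periodic solution of the Moore-Spiegel system with T, R > 0. Then γ intersects the half-plane U = {(x,0,z) : z > 0} in at least one point, and that intersection is transverse (the normal component of F there is z > 0). -/
/-!
With `Φ = z + y + (T - R) x + R x³ / 3`, the third equation says `Φ' = -T x`. If `x ≥ 0` along a
periodic solution, then `Φ` is antitone and periodic, hence constant, which forces `x ≡ 0` and
then `y = x' ≡ 0`, `z = y' ≡ 0`. So on a nonconstant periodic solution the minimum of `x` is
negative. At that minimum `y = ẋ = 0`, and `z = ẍ` cannot be negative; nor can it vanish, since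
then `ż = -T x > 0` would make `z < 0`, hence `y > 0`, hence `x` increasing, just before the
minimum.
-/

/-- The Moore-Spiegel vector field
`F(x,y,z) = (y, z, -z - (T - R + R x²) y - T x)`. -/
noncomputable def mooreSpiegel (T R : ℝ) (p : ℝ × ℝ × ℝ) : ℝ × ℝ × ℝ :=
  (p.2.1, p.2.2, -p.2.2 - (T - R + R * p.1 ^ 2) * p.2.1 - T * p.1)

open Set Filter Topology Function

theorem Function.Periodic.exists_forall_le {α : Type*} [TopologicalSpace α] [LinearOrder α]
    [ClosedIicTopology α] {f : ℝ → α} {c : ℝ} (hp : Periodic f c) (hc : c ≠ 0)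
    (hf : Continuous f) : ∃ t₀, ∀ t, f t₀ ≤ f t := by
  obtain ⟨_, ⟨t₀, rfl⟩, hleast⟩ :=
    (hp.compact_of_continuous hc hf).exists_isLeast (range_nonempty f)
  exact ⟨t₀, fun t => hleast ⟨t, rfl⟩⟩

theorem Function.Periodic.eq_of_antitone {α β : Type*} [AddCommGroup α] [LinearOrder α]
    [IsOrderedAddMonoid α] [Archimedean α] [PartialOrder β] {f : α → β} {c : α}
    (hp : Periodic f c) (hc : 0 < c) (hf : Antitone f) (s t : α) : f s = f t := by
  have key : ∀ s t, f s ≤ f t := fun s t => by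
    obtain ⟨n, hn⟩ := Archimedean.arch (t - s) hc
    calc f s = f (s + n • c) := (hp.nsmul n s).symm
      _ ≤ f t := hf (sub_le_iff_le_add'.1 hn)
  exact le_antisymm (key s t) (key t s)

theorem HasDerivAt.eventually_nhdsLT_lt {f : ℝ → ℝ} {f' a : ℝ} (hf : HasDerivAt f f' a)
    (hf' : 0 < f') : ∀ᶠ t in 𝓝[<] a, f t < f a := by
  filter_upwards [(hasDerivAt_iff_tendsto_slope_left_right.1 hf).1.eventually (lt_mem_nhds hf'),
    self_mem_nhdsWithin] with t hslope ht
  exact (slope_pos_iff_gt ht).1 hslope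

theorem lt_of_hasDerivAt_eq_zero_of_hasDerivAt_neg {f g h : ℝ → ℝ} {c b : ℝ}
    (hf : ∀ t, HasDerivAt f (g t) t) (hg : ∀ t, HasDerivAt g (h t) t) (hcb : c < b)
    (hgb : g b = 0) (hh : ∀ t ∈ Ioo c b, h t < 0) : f c < f b := by
  have hg_anti : StrictAntiOn g (Icc c b) :=
    strictAntiOn_of_hasDerivWithinAt_neg (convex_Icc c b)
      (fun t _ => (hg t).continuousAt.continuousWithinAt) (fun t _ => (hg t).hasDerivWithinAt)
      (by simpa only [interior_Icc] using hh)
  have hg_pos : ∀ t ∈ Ioo c b, 0 < g t := fun t ht =>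
    hgb ▸ hg_anti (Ioo_subset_Icc_self ht) (right_mem_Icc.2 hcb.le) ht.2
  exact strictMonoOn_of_hasDerivWithinAt_pos (convex_Icc c b)
    (fun t _ => (hf t).continuousAt.continuousWithinAt) (fun t _ => (hf t).hasDerivWithinAt)
    (by simpa only [interior_Icc] using hg_pos) (left_mem_Icc.2 hcb.le) (right_mem_Icc.2 hcb.le)
    hcb

theorem IsLocalMin.not_eventually_nhdsLT_secondDeriv_neg {f g h : ℝ → ℝ} {b : ℝ}
    (hmin : IsLocalMin f b) (hf : ∀ t, HasDerivAt f (g t) t) (hg : ∀ t, HasDerivAt g (h t) t) :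
    ¬∀ᶠ t in 𝓝[<] b, h t < 0 := by
  intro hneg
  obtain ⟨c, hcb : c < b, hsub⟩ :=
    mem_nhdsLT_iff_exists_Ioo_subset.1 ((hmin.filter_mono nhdsWithin_le_nhds).and hneg)
  obtain ⟨d, hcd, hdb⟩ := exists_between hcb
  have hlt : f d < f b := lt_of_hasDerivAt_eq_zero_of_hasDerivAt_neg hf hg hdb
    (hmin.hasDerivAt_eq_zero (hf b)) fun t ht => (hsub ⟨hcd.trans ht.1, ht.2⟩).2
  exact hlt.not_ge (hsub ⟨hcd, hdb⟩).1

namespace MooreSpiegel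

theorem hasDerivAt_coords {T R : ℝ} {γ : ℝ → ℝ × ℝ × ℝ}
    (hsol : ∀ t, HasDerivAt γ (mooreSpiegel T R (γ t)) t) :
    (∀ t, HasDerivAt (fun s => (γ s).1) (γ t).2.1 t) ∧
    (∀ t, HasDerivAt (fun s => (γ s).2.1) (γ t).2.2 t) ∧
    (∀ t, HasDerivAt (fun s => (γ s).2.2)
      (-(γ t).2.2 - (T - R + R * (γ t).1 ^ 2) * (γ t).2.1 - T * (γ t).1) t) :=
  ⟨fun t => by simpa [mooreSpiegel] using (hsol t).hasFDerivAt.fst.hasDerivAt,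
    fun t => by simpa [mooreSpiegel] using (hsol t).hasFDerivAt.snd.fst.hasDerivAt,
    fun t => by simpa [mooreSpiegel] using (hsol t).hasFDerivAt.snd.snd.hasDerivAt⟩

variable {T R : ℝ} {x y z : ℝ → ℝ}

theorem hasDerivAt_z_add_y_add_cubic_x (hx : ∀ t, HasDerivAt x (y t) t)
    (hy : ∀ t, HasDerivAt y (z t) t)
    (hz : ∀ t, HasDerivAt z (-z t - (T - R + R * x t ^ 2) * y t - T * x t) t) (t : ℝ) :
    HasDerivAt (fun s => z s + y s + (T - R) * x s + R / 3 * x s ^ 3) (-T * x t) t := by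
  refine ((((hz t).add (hy t)).add ((hx t).const_mul (T - R))).add
    (((hx t).pow 3).const_mul (R / 3))).congr_deriv ?_
  push_cast
  ring

theorem eq_zero_of_periodic_of_nonneg (hT : 0 < T) (hx : ∀ t, HasDerivAt x (y t) t)
    (hy : ∀ t, HasDerivAt y (z t) t)
    (hz : ∀ t, HasDerivAt z (-z t - (T - R + R * x t ^ 2) * y t - T * x t) t)
    {τ : ℝ} (hτ : 0 < τ) (hpx : Periodic x τ) (hpy : Periodic y τ) (hpz : Periodic z τ)
    (hnonneg : ∀ t, 0 ≤ x t) (t : ℝ) : x t = 0 ∧ y t = 0 ∧ z t = 0 := by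
  set Φ := fun s => z s + y s + (T - R) * x s + R / 3 * x s ^ 3
  have hΦ : ∀ t, HasDerivAt Φ (-T * x t) t := hasDerivAt_z_add_y_add_cubic_x hx hy hz
  have hΦ_anti : Antitone Φ :=
    antitone_of_hasDerivAt_nonpos hΦ fun s => (by nlinarith [hnonneg s] : -T * x s ≤ 0)
  have hΦ_per : Periodic Φ τ := fun s => by simp only [Φ, hpx s, hpy s, hpz s]
  have hx0 : x = fun _ => 0 := funext fun s => by
    have hΦ_const : Φ = fun _ => Φ s := funext fun r => hΦ_per.eq_of_antitone hτ hΦ_anti r s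
    have h := (hΦ s).unique (by rw [hΦ_const]; exact hasDerivAt_const s (Φ s))
    simpa [hT.ne'] using h
  have hy0 : y = fun _ => 0 := funext fun s => (hx s).unique (hx0 ▸ hasDerivAt_const s 0)
  have hz0 : z t = 0 := (hy t).unique (hy0 ▸ hasDerivAt_const t 0)
  exact ⟨congrFun hx0 t, congrFun hy0 t, hz0⟩

theorem y_eq_zero_and_z_pos_of_isLocalMin (hT : 0 < T) (hx : ∀ t, HasDerivAt x (y t) t)
    (hy : ∀ t, HasDerivAt y (z t) t)
    (hz : ∀ t, HasDerivAt z (-z t - (T - R + R * x t ^ 2) * y t - T * x t) t)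
    {t₀ : ℝ} (hmin : IsLocalMin x t₀) (hneg : x t₀ < 0) : y t₀ = 0 ∧ 0 < z t₀ := by
  have hy0 : y t₀ = 0 := hmin.hasDerivAt_eq_zero (hx t₀)
  refine ⟨hy0, lt_of_not_ge fun hz_nonpos => hmin.not_eventually_nhdsLT_secondDeriv_neg hx hy ?_⟩
  rcases hz_nonpos.lt_or_eq with hz_neg | hz_zero
  · exact ((hz t₀).continuousAt.eventually_lt continuousAt_const hz_neg).filter_mono
      nhdsWithin_le_nhds
  · have hdz : 0 < -z t₀ - (T - R + R * x t₀ ^ 2) * y t₀ - T * x t₀ := by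
      rw [hy0, hz_zero]; nlinarith
    simpa [hz_zero] using (hz t₀).eventually_nhdsLT_lt hdz

end MooreSpiegel

theorem mooreSpiegel_periodic_hits_U_general (T R : ℝ) (hT : 0 < T)
    (γ : ℝ → ℝ × ℝ × ℝ)
    (hsol : ∀ t, HasDerivAt γ (mooreSpiegel T R (γ t)) t)
    (τ : ℝ) (hτ : 0 < τ) (hper : ∀ t, γ (t + τ) = γ t)
    (hnonconst : ∃ t s : ℝ, γ t ≠ γ s) :
    ∃ t : ℝ, (γ t).2.1 = 0 ∧ 0 < (γ t).2.2 := by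
  obtain ⟨hx, hy, hz⟩ := MooreSpiegel.hasDerivAt_coords hsol
  have hγ_per : Periodic γ τ := hper
  obtain ⟨t₀, hmin⟩ := (hγ_per.comp Prod.fst).exists_forall_le hτ.ne'
    (continuous_iff_continuousAt.2 fun t => (hx t).continuousAt)
  have hneg : (γ t₀).1 < 0 := by
    by_contra! hnonneg
    obtain ⟨t, s, hts⟩ := hnonconst
    have hzero := MooreSpiegel.eq_zero_of_periodic_of_nonneg hT hx hy hz hτ (hγ_per.comp Prod.fst)
      (hγ_per.comp (Prod.fst ∘ Prod.snd)) (hγ_per.comp (Prod.snd ∘ Prod.snd))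
      fun t => hnonneg.trans (hmin t)
    obtain ⟨hxt, hyt, hzt⟩ := hzero t
    obtain ⟨hxs, hys, hzs⟩ := hzero s
    exact hts (Prod.ext (hxt.trans hxs.symm) (Prod.ext (hyt.trans hys.symm) (hzt.trans hzs.symm)))
  exact ⟨t₀, MooreSpiegel.y_eq_zero_and_z_pos_of_isLocalMin hT hx hy hz
    (Eventually.of_forall hmin) hneg⟩

/-- Any periodic (nonconstant) solution of the Moore-Spiegel system with
`T, R > 0` meets the half-plane `U = {(x,0,z) : z > 0}` transversely: at some
time `t`, `y(t) = 0` and `z(t) > 0` (the normal component of the field there is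
`z(t) > 0`). -/
theorem mooreSpiegel_periodic_hits_U (T R : ℝ) (hT : 0 < T) (hR : 0 < R)
    (γ : ℝ → ℝ × ℝ × ℝ)
    (hsol : ∀ t, HasDerivAt γ (mooreSpiegel T R (γ t)) t)
    (τ : ℝ) (hτ : 0 < τ) (hper : ∀ t, γ (t + τ) = γ t)
    (hnonconst : ∃ t s : ℝ, γ t ≠ γ s) :
    ∃ t : ℝ, (γ t).2.1 = 0 ∧ 0 < (γ t).2.2 :=
  mooreSpiegel_periodic_hits_U_general T R hT γ hsol τ hτ hper hnonconst
end
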